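/- arXiv:1709.07628 — 4 statements merged into one kernel-verified Lean document; each statement's English description precedes it below -/
import Mathlib

section
/- Let π be a graphic sequence with n terms in which each term is at most n/24 and such that π + 1 is graphic. Let (G, I) and (G′, J) be any two Kundu realizations of π + 1. Then (G, I) can be transformed into (G′, J) by a finite sequence of swap operations such that every intermediate graph, together with a displayed perfect matching, is again a Kundu realization of π + 1, and at each step the image of the current displayed 1-factor under the swap is the next displayed 1-factor (i.e. each swap is a K-swap). -/
/-!
Any two realizations of a degree sequence are connected by swaps (make the neighbourhood of one
vertex agree, by swaps that each shrink the symmetric difference, then recurse on the remaining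
vertices), so `G` can be carried to `G'`. A swap `ab, cd ⇒ bc, ad` of `G` is a K-swap as soon as
the displayed 1-factor avoids `bc` and `ad`; a 1-factor edge `bc` is moved away by a K-swap with a
1-factor edge `st` whose ends miss the `G`-neighbourhoods of `b` and `c`, and such an edge exists
because all degrees are at most `n / 24`. Once the graph is `G'`, the 1-factor is moved to `J` by
decreasing `|I \ J|`: for `xu ∈ I \ J`, `uv ∈ J` and `vy ∈ I`, the K-swap `xu, vy ⇒ uv, xy`
does it unless `xy ∈ G'`, and in that case a detour through a far 1-factor edge `st` does it in
three K-swaps.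
-/

open scoped Classical

/-- The degree of vertex `v` in the simple graph `G`. -/
noncomputable def deg {V : Type*} [Fintype V] (G : SimpleGraph V) (v : V) : ℕ :=
  (Finset.univ.filter fun w => G.Adj v w).card

/-- A sequence `π` is graphic if some simple graph realizes it degree-wise. -/
def IsGraphic {n : ℕ} (π : Fin n → ℕ) : Prop :=
  ∃ G : SimpleGraph (Fin n), ∀ i, deg G i = π i

/-- A swap operation on a simple graph `H`: the edges `ab, cd ∈ E(H)` (with `a,b,c,d`
distinct) are replaced by the two non-edges `bc, ad ∉ E(H)`, producing `H'`. -/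
def SwapStep {V : Type*} (H H' : SimpleGraph V) (a b c d : V) : Prop :=
  a ≠ b ∧ a ≠ c ∧ a ≠ d ∧ b ≠ c ∧ b ≠ d ∧ c ≠ d ∧
  H.Adj a b ∧ H.Adj c d ∧ ¬ H.Adj b c ∧ ¬ H.Adj a d ∧
  H'.edgeSet = (H.edgeSet \ {s(a, b), s(c, d)}) ∪ {s(b, c), s(a, d)}

/-- A Kundu-restricted swap (K-swap) on a pair `p = (G, I)` (standing for the graph
`G ∪ I` with displayed 1-factor `I`): a swap `ab, cd ⇒ bc, ad` on `G ∪ I` such that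
either both `ab, cd ∈ I` (and the new displayed 1-factor is `(I \ {ab,cd}) ∪ {bc,ad}`,
while `G` is unchanged), or both `ab, cd ∉ I` (and the displayed 1-factor is unchanged,
while the swap is performed inside `G`). -/
def KSwap {V : Type*} (p q : SimpleGraph V × SimpleGraph V) : Prop :=
  ∃ a b c d : V, SwapStep (p.1 ⊔ p.2) (q.1 ⊔ q.2) a b c d ∧
    ((p.2.Adj a b ∧ p.2.Adj c d ∧ q.1 = p.1 ∧
        q.2.edgeSet = (p.2.edgeSet \ {s(a, b), s(c, d)}) ∪ {s(b, c), s(a, d)}) ∨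
     (¬ p.2.Adj a b ∧ ¬ p.2.Adj c d ∧ q.2 = p.2 ∧
        q.1.edgeSet = (p.1.edgeSet \ {s(a, b), s(c, d)}) ∪ {s(b, c), s(a, d)}))

/-- `(G, I)` is a Kundu realization of `π + 1`: `G` realizes `π`, the displayed graph `I`
is a perfect matching (realizes the all-ones sequence), and `G` and `I` are edge-disjoint. -/
def KunduState {n : ℕ} (π : Fin n → ℕ) (p : SimpleGraph (Fin n) × SimpleGraph (Fin n)) :
    Prop :=
  (∀ i, deg p.1 i = π i) ∧ (∀ v, deg p.2 v = 1) ∧ Disjoint p.1 p.2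

open Finset Relation
open scoped symmDiff

theorem deg_eq_card_neighborFinset {V : Type*} [Fintype V] (G : SimpleGraph V) (v : V) :
    deg G v = (G.neighborFinset v).card := by
  rw [G.neighborFinset_eq_filter]
  rfl

theorem exists_swapStep {V : Type*} {H : SimpleGraph V} {a b c d : V} (hab : a ≠ b)
    (hac : a ≠ c) (had : a ≠ d) (hbc : b ≠ c) (hbd : b ≠ d) (hcd : c ≠ d) (h₁ : H.Adj a b)
    (h₂ : H.Adj c d) (h₃ : ¬H.Adj b c) (h₄ : ¬H.Adj a d) : ∃ H', SwapStep H H' a b c d := by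
  refine ⟨.fromEdgeSet ((H.edgeSet \ {s(a, b), s(c, d)}) ∪ {s(b, c), s(a, d)}),
    hab, hac, had, hbc, hbd, hcd, h₁, h₂, h₃, h₄, ?_⟩
  rw [SimpleGraph.edgeSet_fromEdgeSet, sdiff_eq_left, Set.disjoint_union_left]
  refine ⟨(Set.subset_compl_iff_disjoint_right.1 H.edgeSet_subset_compl_diagSet).mono_left
    Set.sdiff_subset, ?_⟩
  simp [Set.disjoint_insert_left, hbc, had]

namespace SwapStep

variable {V : Type*} {G H H' : SimpleGraph V} {a b c d : V}

theorem edgeSet_eq (h : SwapStep H H' a b c d) :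
    H'.edgeSet = (H.edgeSet \ {s(a, b), s(c, d)}) ∪ {s(b, c), s(a, d)} :=
  h.2.2.2.2.2.2.2.2.2.2

theorem adj_iff (h : SwapStep H H' a b c d) {x y : V} :
    H'.Adj x y ↔ (H.Adj x y ∧ s(x, y) ≠ s(a, b) ∧ s(x, y) ≠ s(c, d)) ∨
      s(x, y) = s(b, c) ∨ s(x, y) = s(a, d) := by
  rw [← SimpleGraph.mem_edgeSet, h.edgeSet_eq]
  simp only [Set.mem_union, Set.mem_sdiff, Set.mem_insert_iff, Set.mem_singleton_iff,
    SimpleGraph.mem_edgeSet, not_or]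

theorem adj_bc (h : SwapStep H H' a b c d) : H'.Adj b c :=
  h.adj_iff.2 (Or.inr (Or.inl rfl))

theorem adj_ad (h : SwapStep H H' a b c d) : H'.Adj a d :=
  h.adj_iff.2 (Or.inr (Or.inr rfl))

theorem adj_iff_of_ne (h : SwapStep H H' a b c d) {x y : V}
    (ha : x ≠ a) (hb : x ≠ b) (hc : x ≠ c) (hd : x ≠ d) : H'.Adj x y ↔ H.Adj x y := by
  rw [h.adj_iff]
  aesop

theorem not_adj_ab (h : SwapStep H H' a b c d) : ¬H'.Adj a b := by
  obtain ⟨hab, hac, had, hbc, hbd, hcd, -⟩ := id h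
  rw [h.adj_iff]
  aesop

theorem swap_pairs (h : SwapStep H H' a b c d) : SwapStep H H' b a d c := by
  obtain ⟨hab, hac, had, hbc, hbd, hcd, h₁, h₂, h₃, h₄, hE⟩ := h
  refine ⟨hab.symm, hbd, hbc, had, hac, hcd.symm, h₁.symm, h₂.symm, h₄, h₃, ?_⟩
  rw [hE, Sym2.eq_swap (a := b) (b := a), Sym2.eq_swap (a := d) (b := c),
    Set.pair_comm (s(a, d))]

theorem swap_sides (h : SwapStep H H' a b c d) : SwapStep H H' c d a b := by
  obtain ⟨hab, hac, had, hbc, hbd, hcd, h₁, h₂, h₃, h₄, hE⟩ := h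
  refine ⟨hcd, hac.symm, hbc.symm, had.symm, hbd.symm, hab, h₂, h₁, fun h => h₄ h.symm,
    fun h => h₃ h.symm, ?_⟩
  rw [hE, Set.pair_comm (s(c, d)), Sym2.eq_swap (a := d) (b := a),
    Sym2.eq_swap (a := c) (b := b), Set.pair_comm (s(a, d))]

theorem symm (h : SwapStep H H' a b c d) : SwapStep H' H c b a d := by
  have hE := h.edgeSet_eq
  obtain ⟨hab, hac, had, hbc, hbd, hcd, h₁, h₂, h₃, h₄, -⟩ := id h
  refine ⟨hbc.symm, hac.symm, hcd, hab.symm, hbd, had, h.adj_bc.symm, h.adj_ad,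
    fun h' => h.not_adj_ab h'.symm, h.swap_sides.not_adj_ab, ?_⟩
  have hab' : {s(a, b), s(c, d)} ⊆ H.edgeSet := by
    simp [Set.insert_subset_iff, h₁, h₂]
  have hbc' : Disjoint H.edgeSet {s(b, c), s(a, d)} := by
    simp [Set.disjoint_insert_right, h₃, h₄]
  rw [hE, Sym2.eq_swap (a := c) (b := b), Sym2.eq_swap (a := b) (b := a), Set.union_sdiff_right,
    sdiff_eq_left.2 (hbc'.mono_left Set.sdiff_subset), Set.sdiff_union_of_subset hab']

theorem neighborFinset_a [Fintype V] (h : SwapStep H H' a b c d) :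
    H'.neighborFinset a = insert d ((H.neighborFinset a).erase b) := by
  obtain ⟨hab, hac, had, hbc, hbd, hcd, -⟩ := id h
  ext x
  simp only [SimpleGraph.mem_neighborFinset, mem_insert, mem_erase, h.adj_iff, Sym2.eq_iff]
  aesop

theorem deg_a [Fintype V] (h : SwapStep H H' a b c d) : deg H' a = deg H a := by
  obtain ⟨-, -, -, -, -, -, h₁, -, -, h₄, -⟩ := id h
  rw [deg_eq_card_neighborFinset, deg_eq_card_neighborFinset, h.neighborFinset_a,
    card_insert_of_notMem (by simp [h₄]), card_erase_add_one (by simpa using h₁)]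

theorem deg_eq [Fintype V] (h : SwapStep H H' a b c d) (v : V) : deg H' v = deg H v := by
  rcases eq_or_ne v a with rfl | ha
  · exact h.deg_a
  rcases eq_or_ne v b with rfl | hb
  · exact h.swap_pairs.deg_a
  rcases eq_or_ne v c with rfl | hc
  · exact h.swap_sides.deg_a
  rcases eq_or_ne v d with rfl | hd
  · exact h.swap_sides.swap_pairs.deg_a
  simp only [deg, h.adj_iff_of_ne ha hb hc hd]

theorem sup_left (h : SwapStep H H' a b c d) (hab : ¬G.Adj a b) (hcd : ¬G.Adj c d)
    (hbc : ¬G.Adj b c) (had : ¬G.Adj a d) : SwapStep (G ⊔ H) (G ⊔ H') a b c d := by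
  obtain ⟨hab', hac', had', hbc', hbd', hcd', h₁, h₂, h₃, h₄, -⟩ := id h
  refine ⟨hab', hac', had', hbc', hbd', hcd', Or.inr h₁, Or.inr h₂, by simp [hbc, h₃],
    by simp [had, h₄], ?_⟩
  have hG : Disjoint G.edgeSet {s(a, b), s(c, d)} := by
    simp [Set.disjoint_insert_right, hab, hcd]
  rw [SimpleGraph.edgeSet_sup, SimpleGraph.edgeSet_sup, h.edgeSet_eq, Set.union_sdiff_distrib,
    sdiff_eq_left.2 hG, Set.union_assoc]

theorem disjoint (h : SwapStep H H' a b c d) (hGH : Disjoint G H) (hbc : ¬G.Adj b c)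
    (had : ¬G.Adj a d) : Disjoint G H' := by
  rw [← SimpleGraph.disjoint_edgeSet, h.edgeSet_eq, Set.disjoint_union_right]
  refine ⟨(SimpleGraph.disjoint_edgeSet.2 hGH).mono_right Set.sdiff_subset, ?_⟩
  simp [Set.disjoint_insert_right, hbc, had]

variable [Finite V] {J : SimpleGraph V}

theorem ncard_edgeSet_sdiff_le_succ (h : SwapStep H H' a b c d) (hab : ¬J.Adj a b) :
    (H'.edgeSet \ J.edgeSet).ncard ≤ (H.edgeSet \ J.edgeSet).ncard + 1 := by
  obtain ⟨-, -, -, -, -, -, h₁, -⟩ := id h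
  have hmem : s(a, b) ∈ H.edgeSet \ J.edgeSet := ⟨h₁, hab⟩
  have hsub : H'.edgeSet \ J.edgeSet ⊆
      ((H.edgeSet \ J.edgeSet) \ {s(a, b)}) ∪ {s(b, c), s(a, d)} := by
    rintro e ⟨he, heJ⟩
    rw [h.edgeSet_eq] at he
    rcases he with ⟨heH, hne⟩ | hnew
    · exact Or.inl ⟨⟨heH, heJ⟩, fun he => hne (Or.inl he)⟩
    · exact Or.inr hnew
  have hle := (Set.ncard_le_ncard hsub).trans (Set.ncard_union_le _ _)
  have hnew := Set.ncard_insert_le (s(b, c)) {s(a, d)}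
  have hpos := (Set.ncard_pos).2 ⟨_, hmem⟩
  rw [Set.ncard_sdiff_singleton_of_mem hmem] at hle
  rw [Set.ncard_singleton] at hnew
  omega

theorem ncard_edgeSet_sdiff_lt (h : SwapStep H H' a b c d) (hab : ¬J.Adj a b) (hcd : ¬J.Adj c d)
    (hbc : J.Adj b c) : (H'.edgeSet \ J.edgeSet).ncard < (H.edgeSet \ J.edgeSet).ncard := by
  obtain ⟨-, hac, had, -, -, -, h₁, h₂, -⟩ := id h
  have hold : {s(a, b), s(c, d)} ⊆ H.edgeSet \ J.edgeSet := by
    simp [Set.insert_subset_iff, h₁, h₂, hab, hcd]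
  have hsub : H'.edgeSet \ J.edgeSet ⊆
      ((H.edgeSet \ J.edgeSet) \ {s(a, b), s(c, d)}) ∪ {s(a, d)} := by
    rintro e ⟨he, heJ⟩
    rw [h.edgeSet_eq] at he
    rcases he with ⟨heH, hne⟩ | rfl | rfl
    · exact Or.inl ⟨⟨heH, heJ⟩, hne⟩
    · exact absurd hbc heJ
    · exact Or.inr rfl
  have hle := (Set.ncard_le_ncard hsub).trans (Set.ncard_union_le _ _)
  have htwo := Set.ncard_le_ncard hold
  rw [Set.ncard_sdiff hold, Set.ncard_singleton] at hle
  rw [Set.ncard_pair (by simp [hac, had])] at hle htwo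
  omega

end SwapStep

theorem Relation.ReflTransGen.exists_seq {α : Type*} {r : α → α → Prop} {a b : α}
    (h : ReflTransGen r a b) :
    ∃ (m : ℕ) (f : ℕ → α), f 0 = a ∧ f m = b ∧ ∀ k < m, r (f k) (f (k + 1)) := by
  induction h using ReflTransGen.head_induction_on with
  | refl => exact ⟨0, fun _ => b, rfl, rfl, by simp⟩
  | head hac _ ih =>
    obtain ⟨m, f, h0, hm, hf⟩ := ih
    refine ⟨m + 1, fun k => if k = 0 then _ else f (k - 1), rfl, by simpa, ?_⟩
    rintro (_ | k) hk
    · simpa [h0] using hac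
    · simpa using hf k (by omega)


section Connectivity

variable {V : Type*} {S : Finset V} {H H' H'' : SimpleGraph V}

def SwapWithin (S : Finset V) (H H' : SimpleGraph V) : Prop :=
  ∃ a b c d, a ∈ S ∧ b ∈ S ∧ c ∈ S ∧ d ∈ S ∧ SwapStep H H' a b c d

theorem SwapWithin.symm (h : SwapWithin S H H') : SwapWithin S H' H := by
  obtain ⟨a, b, c, d, ha, hb, hc, hd, h⟩ := h
  exact ⟨c, b, a, d, hc, hb, ha, hd, h.symm⟩

instance : Std.Symm (SwapWithin S) := ⟨fun _ _ => SwapWithin.symm⟩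

theorem SwapWithin.mono {T : Finset V} (hST : S ⊆ T) (h : SwapWithin S H H') :
    SwapWithin T H H' := by
  obtain ⟨a, b, c, d, ha, hb, hc, hd, h⟩ := h
  exact ⟨a, b, c, d, hST ha, hST hb, hST hc, hST hd, h⟩

variable [Fintype V]

def CompatibleOn (S : Finset V) (H H' : SimpleGraph V) : Prop :=
  (∀ v, deg H v = deg H' v) ∧ ∀ x y, x ∉ S ∨ y ∉ S → (H.Adj x y ↔ H'.Adj x y)

namespace CompatibleOn

theorem symm (h : CompatibleOn S H H') : CompatibleOn S H' H :=
  ⟨fun v => (h.1 v).symm, fun x y hxy => (h.2 x y hxy).symm⟩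

theorem trans (h : CompatibleOn S H H') (h' : CompatibleOn S H' H'') : CompatibleOn S H H'' :=
  ⟨fun v => (h.1 v).trans (h'.1 v), fun x y hxy => (h.2 x y hxy).trans (h'.2 x y hxy)⟩

theorem of_swapWithin (h : SwapWithin S H H') : CompatibleOn S H H' := by
  obtain ⟨a, b, c, d, ha, hb, hc, hd, h⟩ := h
  have hout {x : V} (hx : x ∉ S) (y : V) : H.Adj x y ↔ H'.Adj x y :=
    (h.adj_iff_of_ne (x := x) (y := y) (fun h => hx (h ▸ ha)) (fun h => hx (h ▸ hb))
      (fun h => hx (h ▸ hc)) (fun h => hx (h ▸ hd))).symm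
  refine ⟨fun v => (h.deg_eq v).symm, ?_⟩
  rintro x y (hx | hy)
  · exact hout hx y
  · rw [H.adj_comm, H'.adj_comm]
    exact hout hy x

theorem of_reflTransGen (h : ReflTransGen (SwapWithin S) H H') : CompatibleOn S H H' := by
  induction h with
  | refl => exact ⟨fun _ => rfl, fun _ _ _ => Iff.rfl⟩
  | tail _ hstep ih => exact ih.trans (of_swapWithin hstep)

theorem eq_of_empty (h : CompatibleOn ∅ H H') : H = H' := by
  ext x y
  exact h.2 x y (Or.inl (notMem_empty x))

theorem card_neighborFinset_inter (h : CompatibleOn S H H') (u : V) :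
    (H.neighborFinset u ∩ S).card = (H'.neighborFinset u ∩ S).card := by
  have hout : H.neighborFinset u \ S = H'.neighborFinset u \ S := by
    ext x
    simp only [mem_sdiff, SimpleGraph.mem_neighborFinset]
    exact and_congr_left fun hx => h.2 u x (Or.inr hx)
  have hH := card_inter_add_card_sdiff (H.neighborFinset u) S
  have hH' := card_inter_add_card_sdiff (H'.neighborFinset u) S
  rw [← deg_eq_card_neighborFinset, hout] at hH
  rw [← deg_eq_card_neighborFinset] at hH'
  have := h.1 u
  omega

theorem of_insert {v : V} (h : CompatibleOn (insert v S) H H')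
    (hv : H.neighborFinset v ∩ insert v S = H'.neighborFinset v ∩ insert v S) :
    CompatibleOn S H H' := by
  have hvadj : ∀ y ∈ insert v S, H.Adj v y ↔ H'.Adj v y := fun y hy => by
    have := congrArg (y ∈ ·) hv
    simp only [mem_inter, SimpleGraph.mem_neighborFinset, eq_iff_iff] at this
    exact and_congr_left_iff.1 this hy
  refine ⟨h.1, fun x y hxy => ?_⟩
  by_cases hx : x ∈ insert v S
  · by_cases hy : y ∈ insert v S
    · rcases hxy with hxS | hyS
      · rw [(mem_insert.1 hx).resolve_right hxS]
        exact hvadj y hy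
      · rw [(mem_insert.1 hy).resolve_right hyS, H.adj_comm, H'.adj_comm]
        exact hvadj x hx
    · exact h.2 x y (Or.inr hy)
  · exact h.2 x y (Or.inl hx)

end CompatibleOn

theorem exists_adj_not_adj_of_card_le {v w z : V} (hv : v ∈ S) (hz : z ∈ S) (hzv : z ≠ v)
    (hvw : H.Adj v w) (hvz : ¬H.Adj v z)
    (hcard : (H.neighborFinset w ∩ S).card ≤ (H.neighborFinset z ∩ S).card) :
    ∃ t ∈ S, H.Adj z t ∧ ¬H.Adj w t ∧ t ≠ w := by
  -- Otherwise counting forces `N(z) ∩ S = (insert w (N(w) ∩ S)).erase v`; then `w ∈ N(z)`, so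
  -- `z ∈ N(w) ∩ S`, so `z ∈ N(z)`.
  by_contra! hcon
  have hvw' : v ∈ H.neighborFinset w ∩ S := by simp [hvw.symm, hv]
  have hsub : H.neighborFinset z ∩ S ⊆ (insert w (H.neighborFinset w ∩ S)).erase v := by
    intro t ht
    simp only [mem_inter, SimpleGraph.mem_neighborFinset] at ht
    refine mem_erase.2 ⟨fun htv => hvz (htv ▸ ht.1).symm, ?_⟩
    by_cases htw : t = w
    · exact htw ▸ mem_insert_self _ _
    · have hwt : H.Adj w t := by_contra fun hwt => htw (hcon t ht.2 ht.1 hwt)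
      exact mem_insert_of_mem (by simp [hwt, ht.2])
  have heq := eq_of_subset_of_card_le hsub (by
    rw [card_erase_of_mem (mem_insert_of_mem hvw')]
    exact (Nat.sub_le_of_le_add (card_insert_le _ _)).trans hcard)
  have hzw : H.Adj z w := by
    have : w ∈ H.neighborFinset z ∩ S := heq ▸ mem_erase.2 ⟨hvw.ne', mem_insert_self _ _⟩
    simpa using (mem_inter.1 this).1
  have hzz : z ∈ H.neighborFinset z ∩ S :=
    heq ▸ mem_erase.2 ⟨hzv, mem_insert_of_mem (by simp [hzw.symm, hz])⟩
  simp at hzz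

theorem exists_swapWithin_card_symmDiff_lt {B : Finset V} {v w z : V} (hv : v ∈ S)
    (hw : w ∈ S) (hz : z ∈ S) (hzv : z ≠ v) (hvw : H.Adj v w) (hvz : ¬H.Adj v z) (hwB : w ∉ B)
    (hzB : z ∈ B)
    (hcard : (H.neighborFinset w ∩ S).card ≤ (H.neighborFinset z ∩ S).card) :
    ∃ H', SwapWithin S H H' ∧
      ((H'.neighborFinset v ∩ S) ∆ B).card < ((H.neighborFinset v ∩ S) ∆ B).card := by
  obtain ⟨t, ht, hzt, hwt, htw⟩ := exists_adj_not_adj_of_card_le hv hz hzv hvw hvz hcard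
  have hwz : w ≠ z := fun h => hvz (h ▸ hvw)
  have hvt : v ≠ t := fun h => hvz (h ▸ hzt).symm
  -- the swap `wv, zt ⇒ vz, wt` trades `w` for `z` in the neighbourhood of `v`
  obtain ⟨H', hs⟩ :=
    exists_swapStep hvw.ne' hwz htw.symm hzv.symm hvt hzt.ne hvw.symm hzt hvz hwt
  refine ⟨H', ⟨w, v, z, t, hw, hv, hz, ht, hs⟩, card_lt_card ?_⟩
  have hz' : z ∈ (H.neighborFinset v ∩ S) ∆ B := by simp [mem_symmDiff, hvz, hzB]
  refine (ssubset_iff_of_subset fun x hx => ?_).2 ⟨z, hz', fun hz'' => ?_⟩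
  all_goals simp only [hs.swap_pairs.neighborFinset_a, mem_symmDiff, mem_inter, mem_insert,
    mem_erase, SimpleGraph.mem_neighborFinset] at *
  · grind
  · grind

theorem exists_swapWithin_neighborFinset_inter_eq {v : V} (hv : v ∈ S)
    (hHH' : CompatibleOn S H H') :
    ∃ K K', ReflTransGen (SwapWithin S) H K ∧ ReflTransGen (SwapWithin S) H' K' ∧
      K.neighborFinset v ∩ S = K'.neighborFinset v ∩ S := by
  induction hm : ((H.neighborFinset v ∩ S) ∆ (H'.neighborFinset v ∩ S)).card
    using Nat.strong_induction_on generalizing H H' with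
  | _ m ih =>
  set A := H.neighborFinset v ∩ S
  set B := H'.neighborFinset v ∩ S
  by_cases hAB : A = B
  · exact ⟨H, H', .refl, .refl, hAB⟩
  have hcard : A.card = B.card := hHH'.card_neighborFinset_inter v
  obtain ⟨z, hzB, hzA⟩ : ∃ z ∈ B, z ∉ A :=
    not_subset.1 fun h => hAB (eq_of_subset_of_card_le h hcard.le).symm
  obtain ⟨w, hwA, hwB⟩ : ∃ w ∈ A, w ∉ B :=
    not_subset.1 fun h => hAB (eq_of_subset_of_card_le h hcard.ge)
  have hzS := (mem_inter.1 hzB).2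
  have hwS := (mem_inter.1 hwA).2
  have hH'vz : H'.Adj v z := by simpa using (mem_inter.1 hzB).1
  have hHvw : H.Adj v w := by simpa using (mem_inter.1 hwA).1
  rcases le_total (H.neighborFinset w ∩ S).card (H.neighborFinset z ∩ S).card with hle | hle
  · obtain ⟨K, hK, hlt⟩ := exists_swapWithin_card_symmDiff_lt hv hwS hzS hH'vz.ne' hHvw
      (fun h => hzA (mem_inter.2 ⟨by simpa using h, hzS⟩)) hwB hzB hle
    obtain ⟨K₁, K₁', h₁, h₁', heq⟩ :=
      ih _ (hm ▸ hlt) ((CompatibleOn.of_swapWithin hK).symm.trans hHH') rfl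
    exact ⟨K₁, K₁', .head hK h₁, h₁', heq⟩
  · rw [hHH'.card_neighborFinset_inter, hHH'.card_neighborFinset_inter] at hle
    obtain ⟨K', hK', hlt⟩ := exists_swapWithin_card_symmDiff_lt hv hzS hwS hHvw.ne' hH'vz
      (fun h => hwB (mem_inter.2 ⟨by simpa using h, hwS⟩)) hzA hwA hle
    rw [symmDiff_comm, symmDiff_comm B] at hlt
    obtain ⟨K₁, K₁', h₁, h₁', heq⟩ :=
      ih _ (hm ▸ hlt) (hHH'.trans (CompatibleOn.of_swapWithin hK')) rfl
    exact ⟨K₁, K₁', h₁, .head hK' h₁', heq⟩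

theorem reflTransGen_swapWithin_of_compatibleOn (h : CompatibleOn S H H') :
    ReflTransGen (SwapWithin S) H H' := by
  induction S using Finset.induction_on generalizing H H' with
  | empty => rw [h.eq_of_empty]
  | insert v S hvS ih =>
    obtain ⟨K, K', hK, hK', hKK'⟩ :=
      exists_swapWithin_neighborFinset_inter_eq (mem_insert_self v S) h
    have hcompat := (CompatibleOn.of_reflTransGen hK).symm.trans
      (h.trans (CompatibleOn.of_reflTransGen hK'))
    have hchain := ReflTransGen.mono (fun _ _ => SwapWithin.mono (subset_insert v S)) _ _
      (ih (hcompat.of_insert hKK'))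
    exact hK.trans (hchain.trans (Std.Symm.symm _ _ hK'))

theorem reflTransGen_swapWithin_univ_of_deg_eq (h : ∀ v, deg H v = deg H' v) :
    ReflTransGen (SwapWithin univ) H H' :=
  reflTransGen_swapWithin_of_compatibleOn ⟨h, fun x y hxy => by simp at hxy⟩

end Connectivity

section PerfectMatching

variable {V : Type*} [Fintype V] {I J : SimpleGraph V}

theorem existsUnique_adj_of_deg_eq_one {v : V} (h : deg I v = 1) : ∃! w, I.Adj v w := by
  rw [deg_eq_card_neighborFinset, card_eq_one] at h
  obtain ⟨w, hw⟩ := h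
  have hmem : ∀ y, I.Adj v y ↔ y = w := fun y => by simpa using congrArg (y ∈ ·) hw
  exact ⟨w, (hmem w).2 rfl, fun y => (hmem y).1⟩

theorem eq_of_adj_of_deg_eq_one {v w w' : V} (h : deg I v = 1) (hw : I.Adj v w)
    (hw' : I.Adj v w') : w = w' :=
  (existsUnique_adj_of_deg_eq_one h).unique hw hw'

theorem exists_adj_notMem_notMem (hI : ∀ v, deg I v = 1) (A B : Finset V)
    (h : A.card + B.card < Fintype.card V) : ∃ s t, I.Adj s t ∧ s ∉ A ∧ t ∉ B := by
  by_contra! hcon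
  have hsub : univ ⊆ A ∪ B.biUnion (I.neighborFinset ·) := fun s _ => by
    by_cases hs : s ∈ A
    · exact mem_union_left _ hs
    obtain ⟨t, hst, -⟩ := existsUnique_adj_of_deg_eq_one (hI s)
    exact mem_union_right _ (mem_biUnion.2 ⟨t, hcon s t hst hs, by simpa using hst.symm⟩)
  have hcard := (card_le_card hsub).trans (card_union_le _ _)
  have hB : (B.biUnion (I.neighborFinset ·)).card ≤ B.card := by
    refine card_biUnion_le.trans (le_of_eq ?_)
    simp only [← deg_eq_card_neighborFinset, hI, sum_const, smul_eq_mul, mul_one]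
  rw [card_univ] at hcard
  omega

theorem eq_of_le_of_deg_eq_one (hIJ : I ≤ J) (hI : ∀ v, deg I v = 1) (hJ : ∀ v, deg J v = 1) :
    I = J := by
  refine le_antisymm hIJ fun v w hvw => ?_
  obtain ⟨u, hvu, -⟩ := existsUnique_adj_of_deg_eq_one (hI v)
  rwa [eq_of_adj_of_deg_eq_one (hJ v) hvw (hIJ hvu)]

end PerfectMatching

section Kundu

variable {n : ℕ} {π : Fin n → ℕ} {G G' I I' J : SimpleGraph (Fin n)}
  {a b c d x u v y : Fin n}

def KStep (π : Fin n → ℕ) (p q : SimpleGraph (Fin n) × SimpleGraph (Fin n)) : Prop :=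
  KSwap p q ∧ KunduState π q

theorem KunduState.of_reflTransGen {p q : SimpleGraph (Fin n) × SimpleGraph (Fin n)}
    (hp : KunduState π p) (h : ReflTransGen (KStep π) p q) : KunduState π q := by
  rcases h.cases_tail with rfl | ⟨_, -, hstep⟩
  · exact hp
  · exact hstep.2

namespace KunduState

theorem kStep_of_swapStep_snd (hK : KunduState π (G, I)) (h : SwapStep I I' a b c d)
    (hbc : ¬G.Adj b c) (had : ¬G.Adj a d) : KStep π (G, I) (G, I') := by
  obtain ⟨hdeg, hI, hGI⟩ := hK
  obtain ⟨-, -, -, -, -, -, hab, hcd, -⟩ := id h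
  have hGab : ¬G.Adj a b := fun hG => SimpleGraph.disjoint_left.1 hGI _ _ hG hab
  have hGcd : ¬G.Adj c d := fun hG => SimpleGraph.disjoint_left.1 hGI _ _ hG hcd
  exact ⟨⟨a, b, c, d, h.sup_left hGab hGcd hbc had, Or.inl ⟨hab, hcd, rfl, h.edgeSet_eq⟩⟩,
    hdeg, fun v => (h.deg_eq v).trans (hI v), h.disjoint hGI hbc had⟩

theorem kStep_of_swapStep_fst (hK : KunduState π (G, I)) (h : SwapStep G G' a b c d)
    (hbc : ¬I.Adj b c) (had : ¬I.Adj a d) : KStep π (G, I) (G', I) := by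
  obtain ⟨hdeg, hI, hGI⟩ := hK
  obtain ⟨-, -, -, -, -, -, hab, hcd, -⟩ := id h
  have hIab : ¬I.Adj a b := SimpleGraph.disjoint_left.1 hGI _ _ hab
  have hIcd : ¬I.Adj c d := SimpleGraph.disjoint_left.1 hGI _ _ hcd
  have hsup := h.sup_left hIab hIcd hbc had
  rw [sup_comm, sup_comm I] at hsup
  exact ⟨⟨a, b, c, d, hsup, Or.inr ⟨hIab, hIcd, rfl, h.edgeSet_eq⟩⟩,
    fun v => (h.deg_eq v).trans (hdeg v), hI, (h.disjoint hGI.symm hbc had).symm⟩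

theorem exists_kStep_snd (hK : KunduState π (G, I)) (hab : I.Adj a b) (hcd : I.Adj c d)
    (hac : a ≠ c) (hbc : b ≠ c) (hGbc : ¬G.Adj b c) (hGad : ¬G.Adj a d) :
    ∃ I', KStep π (G, I) (G, I') ∧ SwapStep I I' a b c d := by
  have huniq {v w w'} : I.Adj v w → I.Adj v w' → w = w' := eq_of_adj_of_deg_eq_one (hK.2.1 v)
  have had : a ≠ d := by rintro rfl; exact hbc (huniq hab hcd.symm)
  have hbd : b ≠ d := by rintro rfl; exact hac (huniq hab.symm hcd.symm)
  obtain ⟨I', h⟩ := exists_swapStep hab.ne hac had hbc hbd hcd.ne hab hcd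
    (fun h => hac (huniq hab.symm h)) (fun h => hbd (huniq hab h))
  exact ⟨I', hK.kStep_of_swapStep_snd h hGbc hGad, h⟩

theorem one_le_of_adj (hK : KunduState π (G, I)) (h : G.Adj x y) : 1 ≤ π x := by
  rw [← hK.1 x, deg_eq_card_neighborFinset]
  exact card_pos.2 ⟨y, by simpa using h⟩

theorem exists_adj_forall_not_adj {Δ : ℕ} (hK : KunduState π (G, I)) (hΔ : ∀ i, π i ≤ Δ)
    (X Y P Q : Finset (Fin n)) (hspace : (X.card + Y.card) * Δ + P.card + Q.card < n) :
    ∃ s t, I.Adj s t ∧ (∀ x ∈ X, ¬G.Adj x s) ∧ (∀ y ∈ Y, ¬G.Adj y t) ∧ s ∉ P ∧ t ∉ Q := by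
  have hN (Z : Finset (Fin n)) : (Z.biUnion (G.neighborFinset ·)).card ≤ Z.card * Δ :=
    card_biUnion_le.trans <| sum_le_card_nsmul _ _ _ fun z _ => by
      rw [← deg_eq_card_neighborFinset, hK.1]
      exact hΔ z
  obtain ⟨s, t, hst, hs, ht⟩ := exists_adj_notMem_notMem hK.2.1
    (X.biUnion (G.neighborFinset ·) ∪ P) (Y.biUnion (G.neighborFinset ·) ∪ Q) (by
      have := card_union_le (X.biUnion (G.neighborFinset ·)) P
      have := card_union_le (Y.biUnion (G.neighborFinset ·)) Q
      have := hN X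
      have := hN Y
      rw [Fintype.card_fin]
      linarith)
  simp only [mem_union, mem_biUnion, SimpleGraph.mem_neighborFinset, not_or, not_exists,
    not_and] at hs ht
  exact ⟨s, t, hst, hs.1, ht.1, hs.2, ht.2⟩

theorem exists_reflTransGen_not_adj {Δ : ℕ} (hK : KunduState π (G, I)) (hΔ : ∀ i, π i ≤ Δ)
    (hspace : 2 * Δ + 4 < n) {p q : Fin n} (hpb : p ≠ b) (hpc : p ≠ c) :
    ∃ I', ReflTransGen (KStep π) (G, I) (G, I') ∧ ¬I'.Adj b c ∧ (I'.Adj p q ↔ I.Adj p q) := by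
  by_cases hbc : I.Adj b c
  swap
  · exact ⟨I, .refl, hbc, Iff.rfl⟩
  obtain ⟨s, t, hst, hbs, hct, hs, ht⟩ := hK.exists_adj_forall_not_adj hΔ {b} {c} {b, c, p} {p}
    (by simp only [card_singleton]; linarith [card_le_three (a := b) (b := c) (c := p)])
  simp only [mem_singleton, forall_eq, mem_insert, not_or] at hbs hct hs ht
  -- the K-swap `cb, st ⇒ bs, ct`
  obtain ⟨I', hstep, hs'⟩ := hK.exists_kStep_snd hbc.symm hst (Ne.symm hs.2.1) (Ne.symm hs.1)
    hbs hct
  exact ⟨I', .single hstep, fun h => hs'.not_adj_ab h.symm,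
    hs'.adj_iff_of_ne hpc hpb (Ne.symm hs.2.2) (Ne.symm ht)⟩

theorem exists_reflTransGen_of_swapStep (hK : KunduState π (G, I)) (hΔ : ∀ i, 24 * π i ≤ n)
    (h : SwapStep G G' a b c d) : ∃ I', ReflTransGen (KStep π) (G, I) (G', I') := by
  obtain ⟨hab, hac, -, -, hbd, -, h₁, -⟩ := id h
  have hΔ' (i : Fin n) : π i ≤ n / 24 := by have := hΔ i; omega
  have hspace : 2 * (n / 24) + 4 < n := by have := hK.one_le_of_adj h₁; have := hΔ a; omega
  obtain ⟨I₁, hI₁, hbc₁, -⟩ := hK.exists_reflTransGen_not_adj (b := b) (c := c) (q := d) hΔ'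
    hspace hab hac
  obtain ⟨I₂, hI₂, had₂, hbc₂⟩ := (hK.of_reflTransGen hI₁).exists_reflTransGen_not_adj
    (b := a) (c := d) (q := c) hΔ' hspace hab.symm hbd
  exact ⟨I₂, (hI₁.trans hI₂).tail <|
    (hK.of_reflTransGen (hI₁.trans hI₂)).kStep_of_swapStep_fst h (mt hbc₂.1 hbc₁) had₂⟩

theorem exists_reflTransGen_of_swapWithin {S : Finset (Fin n)} (hK : KunduState π (G, I))
    (hΔ : ∀ i, 24 * π i ≤ n) (h : ReflTransGen (SwapWithin S) G G') :
    ∃ I', ReflTransGen (KStep π) (G, I) (G', I') := by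
  induction h with
  | refl => exact ⟨I, .refl⟩
  | tail _ hstep ih =>
    obtain ⟨I₁, hI₁⟩ := ih
    obtain ⟨a, b, c, d, -, -, -, -, hs⟩ := hstep
    obtain ⟨I₂, hI₂⟩ := (hK.of_reflTransGen hI₁).exists_reflTransGen_of_swapStep hΔ hs
    exact ⟨I₂, hI₁.trans hI₂⟩

theorem exists_kStep_ncard_lt (hI : KunduState π (G, I)) (hJ : KunduState π (G, J))
    (hxu : I.Adj x u) (hJxu : ¬J.Adj x u) (huv : J.Adj u v) (hvy : I.Adj v y)
    (hxy : ¬G.Adj x y) :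
    ∃ I', KStep π (G, I) (G, I') ∧ SwapStep I I' x u v y ∧
      (I'.edgeSet \ J.edgeSet).ncard < (I.edgeSet \ J.edgeSet).ncard := by
  have hxv : x ≠ v := by rintro rfl; exact hJxu huv.symm
  have hyu : y ≠ u := by
    rintro rfl; exact hxv (eq_of_adj_of_deg_eq_one (hI.2.1 y) hxu.symm hvy.symm)
  have hGuv : ¬G.Adj u v := fun hG => SimpleGraph.disjoint_left.1 hJ.2.2 _ _ hG huv
  obtain ⟨I', hstep, hs⟩ := hI.exists_kStep_snd hxu hvy hxv huv.ne hGuv hxy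
  exact ⟨I', hstep, hs, hs.ncard_edgeSet_sdiff_lt hJxu
    (fun h => hyu (eq_of_adj_of_deg_eq_one (hJ.2.1 v) h huv.symm)) huv⟩

theorem exists_reflTransGen_ncard_lt_of_adj {Δ : ℕ} (hI : KunduState π (G, I))
    (hJ : KunduState π (G, J)) (hΔ : ∀ i, π i ≤ Δ) (hspace : 4 * Δ + 6 < n)
    (hxu : I.Adj x u) (hJxu : ¬J.Adj x u) (huv : J.Adj u v) (hvy : I.Adj v y)
    (hxy : G.Adj x y) :
    ∃ I', ReflTransGen (KStep π) (G, I) (G, I') ∧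
      (I'.edgeSet \ J.edgeSet).ncard < (I.edgeSet \ J.edgeSet).ncard := by
  obtain ⟨x', hxx', -⟩ := existsUnique_adj_of_deg_eq_one (hJ.2.1 x)
  obtain ⟨w, hx'w, -⟩ := existsUnique_adj_of_deg_eq_one (hI.2.1 x')
  have hvx : v ≠ x := by rintro rfl; exact hJxu huv.symm
  have hxy' : x ≠ y := by
    rintro rfl; exact huv.ne (eq_of_adj_of_deg_eq_one (hI.2.1 _) hxu hvy.symm)
  have hx'u : x' ≠ u := by rintro rfl; exact hJxu hxx'
  have hx'v : x' ≠ v := by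
    rintro rfl; exact hxu.ne (eq_of_adj_of_deg_eq_one (hJ.2.1 x') hxx'.symm huv.symm)
  have hx'y : x' ≠ y := by rintro rfl; exact SimpleGraph.disjoint_left.1 hJ.2.2 _ _ hxy hxx'
  obtain ⟨s, t, hst, hs, ht, hs', ht'⟩ := hI.exists_adj_forall_not_adj hΔ {x, w} {u, y} {v, x'}
    {x, u, v, x'} <| by
      nlinarith [card_le_two (a := x) (b := w), card_le_two (a := u) (b := y),
        card_le_two (a := v) (b := x'), card_le_four (a := x) (b := u) (c := v) (d := x')]
  simp only [mem_insert, mem_singleton, forall_eq_or_imp, forall_eq, not_or] at hs ht hs' ht'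
  obtain ⟨hxs, hws⟩ := hs
  obtain ⟨hut, hyt⟩ := ht
  obtain ⟨hsv, hsx'⟩ := hs'
  obtain ⟨htx, htu, htv, htx'⟩ := ht'
  -- `xu, ts ⇒ ut, xs`, then `tu, vy ⇒ uv, ty`, then `sx, x'w ⇒ xx', sw`:
  -- only the first K-swap can increase `|I \ J|`, and by one at most.
  obtain ⟨I₁, step₁, hs₁⟩ := hI.exists_kStep_snd hxu hst.symm (Ne.symm htx) (Ne.symm htu) hut hxs
  obtain ⟨I₂, step₂, hs₂, hlt₂⟩ := step₁.2.exists_kStep_ncard_lt hJ hs₁.adj_bc.symm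
    (fun h => htv (eq_of_adj_of_deg_eq_one (hJ.2.1 u) h.symm huv))
    huv ((hs₁.adj_iff_of_ne hvx huv.ne' (Ne.symm htv) (Ne.symm hsv)).2 hvy) fun h => hyt h.symm
  have hI₂sx : I₂.Adj s x :=
    ((hs₂.adj_iff_of_ne (Ne.symm htx) hxu.ne (Ne.symm hvx) hxy').2 hs₁.adj_ad).symm
  have hI₂x'w : I₂.Adj x' w := (hs₂.adj_iff_of_ne (Ne.symm htx') hx'u hx'v hx'y).2
    ((hs₁.adj_iff_of_ne hxx'.ne' hx'u (Ne.symm htx') (Ne.symm hsx')).2 hx'w)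
  obtain ⟨I₃, step₃, -, hlt₃⟩ := step₂.2.exists_kStep_ncard_lt hJ hI₂sx
    (fun h => hsx' (eq_of_adj_of_deg_eq_one (hJ.2.1 x) h.symm hxx')) hxx' hI₂x'w fun h => hws h.symm
  have hle₁ := hs₁.ncard_edgeSet_sdiff_le_succ hJxu
  exact ⟨I₃, .tail (.tail (.single step₁) step₂) step₃, by omega⟩

theorem reflTransGen_kStep_same_graph (hI : KunduState π (G, I)) (hJ : KunduState π (G, J))
    (hΔ : ∀ i, 24 * π i ≤ n) : ReflTransGen (KStep π) (G, I) (G, J) := by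
  induction hm : (I.edgeSet \ J.edgeSet).ncard using Nat.strong_induction_on generalizing I with
  | _ m ih =>
  rcases Nat.eq_zero_or_pos m with rfl | hpos
  · rw [Set.ncard_eq_zero, Set.sdiff_eq_empty, SimpleGraph.edgeSet_subset_edgeSet] at hm
    rw [eq_of_le_of_deg_eq_one hm hI.2.1 hJ.2.1]
  obtain ⟨e, heI, heJ⟩ := Set.nonempty_of_ncard_ne_zero (hm ▸ hpos.ne')
  induction e using Sym2.ind with | _ x u => ?_
  obtain ⟨v, huv, -⟩ := existsUnique_adj_of_deg_eq_one (hJ.2.1 u)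
  obtain ⟨y, hvy, -⟩ := existsUnique_adj_of_deg_eq_one (hI.2.1 v)
  obtain ⟨I', hI', hlt⟩ : ∃ I', ReflTransGen (KStep π) (G, I) (G, I') ∧
      (I'.edgeSet \ J.edgeSet).ncard < (I.edgeSet \ J.edgeSet).ncard := by
    by_cases hxy : G.Adj x y
    · have := hI.one_le_of_adj hxy
      have := hΔ x
      exact hI.exists_reflTransGen_ncard_lt_of_adj hJ (Δ := n / 24)
        (fun i => by have := hΔ i; omega) (by omega) heI heJ huv hvy hxy
    · obtain ⟨I', hstep, -, hlt⟩ := hI.exists_kStep_ncard_lt hJ heI heJ huv hvy hxy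
      exact ⟨I', .single hstep, hlt⟩
  exact hI'.trans (ih _ (hm ▸ hlt) (hI.of_reflTransGen hI') rfl)

end KunduState

end Kundu

theorem kundu_realizations_connected_general {n : ℕ} (π : Fin n → ℕ)
    (hΔ : ∀ i, 24 * π i ≤ n)
    (G I G' J : SimpleGraph (Fin n))
    (h₁ : KunduState π (G, I)) (h₂ : KunduState π (G', J)) :
    ∃ (m : ℕ) (f : ℕ → SimpleGraph (Fin n) × SimpleGraph (Fin n)),
      f 0 = (G, I) ∧ f m = (G', J) ∧
      (∀ k < m, KSwap (f k) (f (k + 1))) ∧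
      (∀ k ≤ m, KunduState π (f k)) := by
  have hG : ReflTransGen (SwapWithin univ) G G' :=
    reflTransGen_swapWithin_univ_of_deg_eq fun v => (h₁.1 v).trans (h₂.1 v).symm
  obtain ⟨I', hI'⟩ := h₁.exists_reflTransGen_of_swapWithin hΔ hG
  have hreach := hI'.trans ((h₁.of_reflTransGen hI').reflTransGen_kStep_same_graph h₂ hΔ)
  obtain ⟨m, f, h0, hm, hf⟩ := hreach.exists_seq
  refine ⟨m, f, h0, hm, fun k hk => (hf k hk).1, fun k hk => ?_⟩
  rcases k with _ | k
  · exact h0 ▸ h₁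
  · exact (hf k (by omega)).2

/-- Any two Kundu realizations of `π + 1` can be transformed into each other by a finite
sequence of K-swaps such that every intermediate pair is again a Kundu realization of
`π + 1` (at each step the image of the displayed 1-factor is the next displayed 1-factor). -/
theorem kundu_realizations_connected {n : ℕ} (π : Fin n → ℕ)
    (hgraphic : IsGraphic π)
    (hΔ : ∀ i, 24 * π i ≤ n)
    (hplus : IsGraphic (fun i => π i + 1))
    (G I G' J : SimpleGraph (Fin n))
    (h₁ : KunduState π (G, I)) (h₂ : KunduState π (G', J)) :
    ∃ (m : ℕ) (f : ℕ → SimpleGraph (Fin n) × SimpleGraph (Fin n)),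
      f 0 = (G, I) ∧ f m = (G', J) ∧
      (∀ k < m, KSwap (f k) (f (k + 1))) ∧
      (∀ k ≤ m, KunduState π (f k)) :=
  kundu_realizations_connected_general π hΔ G I G' J h₁ h₂
end

section
/- Let G and G′ be bipartite simple graphs with the same bipartition (A, B) of a common finite vertex set, such that d_G(v) = d_{G′}(v) for every vertex v. Then the symmetric difference ∇ = E(G) △ E(G′), with edges colored red (in G) and blue (in G′), can be decomposed into red–blue alternating cycles, where no cycle contains any vertex twice. -/
open scoped Classical

/-- A list of edges is alternating with respect to the coloring in which edges of `G`
are red (and the remaining edges blue): the edges at even positions are all of one color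
and the edges at odd positions all of the other color. -/
def Alternating {V : Type*} (G : SimpleGraph V) (l : List (Sym2 V)) : Prop :=
  ∃ b : Bool, ∀ i : Fin l.length, (l.get i ∈ G.edgeSet ↔ (Even (i : ℕ) ↔ b = true))

/-!
Give the edges of `G` (red) the sign `+1` and all other edges (blue) the sign `-1`. The degree
condition says that at every vertex the signs of the incident edges of `∇` sum to zero. Hence an
alternating path can always be continued at its front by an edge of the opposite colour; as paths
are bounded in length, some continuation hits the path again and closes an alternating cycle.
Along any walk the incidences with alternating signs telescope, so a closed alternating walk of
even length, e.g. a cycle of a bipartite graph, has signed degree zero everywhere. Removing the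
cycle therefore keeps `∇` balanced, and induction on the number of edges finishes the proof.
-/

namespace SimpleGraph

variable {V : Type*}

noncomputable def edgeSign (G : SimpleGraph V) (e : Sym2 V) : ℤ :=
  if e ∈ G.edgeSet then 1 else -1

def IsColorAlternating (G : SimpleGraph V) (l : List (Sym2 V)) : Prop :=
  l.IsChain fun e f => G.edgeSign f = -G.edgeSign e

noncomputable def signedDegree (G : SimpleGraph V) (E : Finset (Sym2 V)) (x : V) : ℤ :=
  ∑ e ∈ E with x ∈ e, G.edgeSign e

noncomputable def altIncidence (x : V) : List (Sym2 V) → ℤ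
  | [] => 0
  | e :: l => (if x ∈ e then 1 else 0) - altIncidence x l

section Alternation

variable {G H : SimpleGraph V}

theorem edgeSign_eq_one_iff {e : Sym2 V} : G.edgeSign e = 1 ↔ e ∈ G.edgeSet := by
  unfold edgeSign; split_ifs <;> simp_all

theorem edgeSign_ne_zero (e : Sym2 V) : G.edgeSign e ≠ 0 := by
  unfold edgeSign; split_ifs <;> simp

theorem edgeSign_eq_of_ne_neg {e f : Sym2 V} (h : G.edgeSign f ≠ -G.edgeSign e) :
    G.edgeSign f = G.edgeSign e := by
  unfold edgeSign at *; split_ifs at * <;> simp_all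

theorem IsColorAlternating.edgeSign_getElem {e : Sym2 V} {l : List (Sym2 V)}
    (h : G.IsColorAlternating (e :: l)) (i : ℕ) (hi : i < (e :: l).length) :
    G.edgeSign (e :: l)[i] = (-1) ^ i * G.edgeSign e := by
  induction i with
  | zero => simp
  | succ i ih => rw [h.getElem i hi, ih (by omega), pow_succ]; ring

theorem IsColorAlternating.alternating {l : List (Sym2 V)} (h : G.IsColorAlternating l) :
    Alternating G l := by
  cases l with
  | nil => exact ⟨true, fun i => i.elim0⟩
  | cons e l =>
    refine ⟨decide (e ∈ G.edgeSet), fun i => ?_⟩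
    rw [List.get_eq_getElem, ← edgeSign_eq_one_iff, h.edgeSign_getElem, decide_eq_true_iff,
      ← edgeSign_eq_one_iff]
    rcases Nat.even_or_odd i with hi | hi
    · simp [hi, hi.neg_one_pow]
    · have : G.edgeSign e = -1 ↔ G.edgeSign e ≠ 1 := by unfold edgeSign; split_ifs <;> simp
      simp [hi.neg_one_pow, Nat.not_even_iff_odd.mpr hi, neg_eq_iff_eq_neg, this]

theorem IsColorAlternating.sum_edgeSign {e : Sym2 V} {l : List (Sym2 V)}
    (h : G.IsColorAlternating (e :: l)) (x : V) :
    ((e :: l).map fun f => if x ∈ f then G.edgeSign f else 0).sum =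
      G.edgeSign e * altIncidence x (e :: l) := by
  induction l generalizing e with
  | nil => simp [altIncidence]
  | cons f l ih =>
    obtain ⟨hef, hl⟩ := List.isChain_cons_cons.mp h
    rw [List.map_cons, List.sum_cons, ih hl, hef]
    simp only [altIncidence]
    split_ifs <;> ring

theorem Walk.altIncidence_edges {u v : V} (p : H.Walk u v) (x : V) :
    altIncidence x p.edges =
      (if x = u then 1 else 0) - (-1) ^ p.length * (if x = v then 1 else 0) := by
  induction p with
  | nil => simp [altIncidence]
  | @cons u w v h p ih =>
    rw [edges_cons, altIncidence, ih, length_cons, pow_succ]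
    simp only [Sym2.mem_iff]
    have := h.ne
    split_ifs <;> simp_all

theorem Walk.sum_edgeSign_eq_zero {u : V} (p : H.Walk u u) (hp : G.IsColorAlternating p.edges)
    (heven : Even p.length) (x : V) :
    (p.edges.map fun f => if x ∈ f then G.edgeSign f else 0).sum = 0 := by
  cases hpe : p.edges with
  | nil => rfl
  | cons e l =>
    rw [hpe] at hp
    rw [hp.sum_edgeSign, ← hpe, p.altIncidence_edges, heven.neg_one_pow]
    ring

theorem signedDegree_sdiff {E : Finset (Sym2 V)} {l : List (Sym2 V)} (hl : l.Nodup)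
    (hlE : l.toFinset ⊆ E) (x : V) :
    G.signedDegree (E \ l.toFinset) x =
      G.signedDegree E x - (l.map fun f => if x ∈ f then G.edgeSign f else 0).sum := by
  simp only [signedDegree, Finset.sum_filter]
  rw [Finset.sum_sdiff_eq_sub hlE, List.sum_toFinset _ hl]

theorem exists_edgeSign_eq_neg {E : Finset (Sym2 V)} {x : V} (hx : G.signedDegree E x = 0)
    {e : Sym2 V} (he : e ∈ E) (hxe : x ∈ e) :
    ∃ f ∈ E, x ∈ f ∧ G.edgeSign f = -G.edgeSign e := by
  by_contra! hne
  have hconst : ∀ f ∈ E.filter (x ∈ ·), G.edgeSign f = G.edgeSign e := fun f hf =>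
    edgeSign_eq_of_ne_neg (hne f (Finset.mem_filter.mp hf).1 (Finset.mem_filter.mp hf).2)
  rw [signedDegree, Finset.sum_eq_card_nsmul hconst, smul_eq_zero] at hx
  rcases hx with hx | hx
  · exact Finset.card_ne_zero.mpr ⟨e, Finset.mem_filter.mpr ⟨he, hxe⟩⟩ hx
  · exact edgeSign_ne_zero e hx

theorem Walk.IsPath.isCycle_cons_takeUntil {v w y s : V} {h : H.Adj v w} {q : H.Walk w s}
    (hp : (cons h q).IsPath) (hy : y ∈ q.support) (hyv : H.Adj y v) (hyw : y ≠ w) :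
    (cons hyv (cons h (q.takeUntil y hy))).IsCycle := by
  rw [cons_isPath_iff] at hp
  have hv : v ∉ (q.takeUntil y hy).support :=
    fun hv => hp.2 (q.support_takeUntil_subset_support hy hv)
  rw [cons_isCycle_iff, cons_isPath_iff, edges_cons, List.mem_cons]
  refine ⟨⟨hp.1.takeUntil hy, hv⟩, ?_⟩
  rintro (hyv' | hyv')
  · simp_all [hyv.ne]
  · exact hv ((q.takeUntil y hy).snd_mem_support_of_mem_edges hyv')

variable [Fintype V] {E : Finset (Sym2 V)}

open Walk in
theorem exists_alternatingCycle_of_isPath (hEH : ∀ e ∈ E, e ∈ H.edgeSet)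
    (hbal : ∀ x, G.signedDegree E x = 0) {v w s : V} (h : H.Adj v w) (q : H.Walk w s)
    (hp : (cons h q).IsPath) (hpE : ∀ e ∈ (cons h q).edges, e ∈ E)
    (halt : G.IsColorAlternating (cons h q).edges) :
    ∃ (u : V) (c : H.Walk u u),
      c.IsCycle ∧ G.IsColorAlternating c.edges ∧ ∀ e ∈ c.edges, e ∈ E := by
  rw [edges_cons] at hpE halt
  obtain ⟨f, hfE, hvf, hf⟩ :=
    exists_edgeSign_eq_neg (hbal v) (hpE _ List.mem_cons_self) (Sym2.mem_mk_left v w)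
  obtain ⟨y, rfl⟩ := Sym2.mem_iff_exists.mp hvf
  have hvy : H.Adj v y := hEH _ hfE
  replace hf : G.edgeSign s(v, w) = -G.edgeSign s(y, v) := by
    rw [Sym2.eq_swap (a := y)]; linarith
  have hyw : y ≠ w := by
    rintro rfl
    rw [Sym2.eq_swap] at hf
    exact edgeSign_ne_zero _ (by linarith)
  by_cases hy : y ∈ q.support
  · refine ⟨y, cons hvy.symm (cons h (q.takeUntil y hy)), ?_, ?_, ?_⟩
    · exact hp.isCycle_cons_takeUntil hy hvy.symm hyw
    · rw [edges_cons, edges_cons, IsColorAlternating, List.isChain_cons_cons]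
      exact ⟨hf, halt.prefix <|
        List.cons_prefix_cons.mpr ⟨rfl, q.edges_takeUntil_prefix_edges hy⟩⟩
    · intro e he
      simp only [edges_cons, List.mem_cons] at he
      rcases he with rfl | rfl | he
      · rwa [Sym2.eq_swap]
      · exact hpE _ List.mem_cons_self
      · exact hpE _ (List.mem_cons_of_mem _ (q.edges_takeUntil_subset_edges hy he))
  · have hyv : y ∉ (cons h q).support := by simp [hvy.ne', hy]
    have hp' : (cons hvy.symm (cons h q)).IsPath := (cons_isPath_iff _ _).mpr ⟨hp, hyv⟩
    have := hp'.length_lt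
    refine exists_alternatingCycle_of_isPath hEH hbal hvy.symm (cons h q) hp' ?_ ?_
    · intro e he
      simp only [edges_cons, List.mem_cons] at he
      rcases he with rfl | he
      · rwa [Sym2.eq_swap]
      · exact hpE e (List.mem_cons.mpr he)
    · rw [edges_cons, edges_cons, IsColorAlternating, List.isChain_cons_cons]
      exact ⟨hf, halt⟩
termination_by Fintype.card V - q.length
decreasing_by simp only [length_cons] at this ⊢; omega

theorem exists_alternatingCycle_of_nonempty (hEH : ∀ e ∈ E, e ∈ H.edgeSet)
    (hbal : ∀ x, G.signedDegree E x = 0) (hne : E.Nonempty) :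
    ∃ (u : V) (c : H.Walk u u),
      c.IsCycle ∧ G.IsColorAlternating c.edges ∧ ∀ e ∈ c.edges, e ∈ E := by
  obtain ⟨e, he⟩ := hne
  induction e using Sym2.ind with
  | _ a b =>
    have hab : H.Adj a b := hEH _ he
    refine exists_alternatingCycle_of_isPath hEH hbal hab .nil ?_ (by simpa using he)
      (by simp [IsColorAlternating])
    simpa using hab.ne

theorem exists_alternatingCycle_decomposition (hH : H.Colorable 2) (E : Finset (Sym2 V))
    (hEH : ∀ e ∈ E, e ∈ H.edgeSet) (hbal : ∀ x, G.signedDegree E x = 0) :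
    ∃ ws : List (Σ v : V, H.Walk v v),
      (∀ w ∈ ws, w.2.IsCycle ∧ G.IsColorAlternating w.2.edges) ∧
      (ws.map fun w => (w.2.edges : Multiset (Sym2 V))).sum = E.val := by
  induction E using Finset.strongInduction with
  | H E ih =>
  rcases E.eq_empty_or_nonempty with rfl | hne
  · exact ⟨[], by simp, by simp⟩
  obtain ⟨u, c, hc, halt, hcE⟩ := exists_alternatingCycle_of_nonempty hEH hbal hne
  have hnodup := hc.edges_nodup
  have hcE' : c.edges.toFinset ⊆ E := fun e he => hcE e (List.mem_toFinset.mp he)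
  have hc_ne : c.edges.toFinset.Nonempty := by
    simpa [List.toFinset_nonempty_iff, Ne, Walk.edges_eq_nil] using hc.not_nil
  have hE' : ∀ x, G.signedDegree (E \ c.edges.toFinset) x = 0 := fun x => by
    rw [signedDegree_sdiff hnodup hcE', hbal x,
      c.sum_edgeSign_eq_zero halt (two_colorable_iff_forall_loop_even.mp hH u c), sub_zero]
  obtain ⟨ws, hws, hsum⟩ := ih _ (Finset.sdiff_ssubset hcE' hc_ne)
    (fun e he => hEH e (Finset.mem_sdiff.mp he).1) hE'
  refine ⟨⟨u, c⟩ :: ws, ?_, ?_⟩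
  · simpa [hc, halt] using hws
  · have hval : c.edges.toFinset.val = c.edges := by rw [List.toFinset_val, hnodup.dedup]
    rw [List.map_cons, List.sum_cons, hsum, Finset.sdiff_val, ← hval]
    exact add_tsub_cancel_of_le (Finset.val_le_iff.mpr hcE')

end Alternation

section Degree

variable [Fintype V]

theorem deg_eq_sum_incident (G : SimpleGraph V) (x : V) :
    (deg G x : ℤ) = ∑ e : Sym2 V with x ∈ e, if e ∈ G.edgeSet then 1 else 0 := by
  have hinc : G.incidenceFinset x = ({e | x ∈ e ∧ e ∈ G.edgeSet} : Finset (Sym2 V)) := by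
    ext e
    simp [mem_incidenceFinset, incidenceSet, and_comm]
  rw [Finset.sum_boole, Finset.filter_filter, ← hinc, card_incidenceFinset_eq_degree,
    ← card_neighborFinset_eq_degree, neighborFinset_eq_filter, deg]

theorem signedDegree_symmDiff (G G' : SimpleGraph V) (x : V) :
    G.signedDegree ((G \ G') ⊔ (G' \ G)).edgeFinset x = deg G x - deg G' x := by
  have hsign : ∀ e : Sym2 V, (if e ∈ ((G \ G') ⊔ (G' \ G)).edgeSet then G.edgeSign e else 0) =
      (if e ∈ G.edgeSet then 1 else 0) - (if e ∈ G'.edgeSet then 1 else 0) := by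
    intro e
    by_cases hG : e ∈ G.edgeSet <;> by_cases hG' : e ∈ G'.edgeSet <;>
      simp [edgeSign, hG, hG']
  rw [deg_eq_sum_incident, deg_eq_sum_incident, ← Finset.sum_sub_distrib]
  simp_rw [← hsign]
  rw [← Finset.sum_filter, Finset.filter_filter, signedDegree]
  congr 1
  ext e
  simp [and_comm]

end Degree

end SimpleGraph

/-- Let `G`, `G'` be bipartite simple graphs with the same bipartition `(A, B)` of a common
finite vertex set, with `d_G(v) = d_{G'}(v)` for every `v`. Then `∇ = E(G) △ E(G')`
(edges of `G` red, edges of `G'` blue) decomposes into red–blue alternating cycles, where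
no cycle contains any vertex twice: there is a list of closed walks in the graph
`(G \ G') ⊔ (G' \ G)`, each of which is a cycle and alternating, whose edges taken all
together use every edge of `∇` exactly once. -/
theorem bipartite_symmDiff_decomposes_into_alternating_cycles
    {V : Type*} [Fintype V] (G G' : SimpleGraph V) (A : Set V)
    (hGbip : ∀ a b, G.Adj a b → (a ∈ A ↔ b ∉ A))
    (hG'bip : ∀ a b, G'.Adj a b → (a ∈ A ↔ b ∉ A))
    (hdeg : ∀ v, deg G v = deg G' v) :
    ∃ ws : List (Σ v : V, ((G \ G') ⊔ (G' \ G)).Walk v v),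
      (∀ w ∈ ws, w.2.IsCycle ∧ Alternating G w.2.edges) ∧
      ((ws.map fun w => (w.2.edges : Multiset (Sym2 V))).sum).Nodup ∧
      (∀ e : Sym2 V,
        e ∈ (ws.map fun w => (w.2.edges : Multiset (Sym2 V))).sum ↔
          e ∈ ((G \ G') ⊔ (G' \ G)).edgeSet) := by
  set H := (G \ G') ⊔ (G' \ G)
  have hH : H.Colorable 2 := by
    refine (SimpleGraph.Coloring.mk (fun v => decide (v ∈ A)) ?_).colorable
    rintro a b (⟨hab, -⟩ | ⟨hab, -⟩)
    · simp [hGbip a b hab]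
    · simp [hG'bip a b hab]
  obtain ⟨ws, hws, hsum⟩ := SimpleGraph.exists_alternatingCycle_decomposition hH H.edgeFinset
    (fun e => SimpleGraph.mem_edgeFinset.mp)
    (fun x => by rw [SimpleGraph.signedDegree_symmDiff, hdeg, sub_self])
  refine ⟨ws, fun w hw => ⟨(hws w hw).1, (hws w hw).2.alternating⟩, ?_, fun e => ?_⟩
  · exact hsum ▸ H.edgeFinset.nodup
  · rw [hsum, Finset.mem_val, SimpleGraph.mem_edgeFinset]
end

section
/- Let G be a simple graph with maximum degree Δ, and let I and J be two edge-disjoint perfect matchings on the same vertex set, each edge-disjoint from G. Let C be an alternating cycle of the symmetric difference I △ J of length L, where edges of I are red and edges of J are blue. If L > 4Δ + 6, then there exist two red edges e = ab and f = cd of C that are non-consecutive along C, with a, b, c, d occurring in this cyclic order on C, such that neither bc nor ad is an edge of G. -/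
open scoped Classical

/-!
Because `I` and `J` are matchings, the colours alternate along `C`; hence `C` has even length `L`
and its red edges are exactly those at positions of one parity. Fix a red edge `ab` at position
`r ∈ {0, 1}`. Of the `L / 2 ≥ 2Δ + 4` red edges `cd`, at most `Δ` have `c` adjacent to `b` in `G`,
at most `Δ` have `d` adjacent to `a`, and at most three are `ab` itself or one of its two
neighbouring red edges, so some red edge survives.
-/

open Finset

namespace SimpleGraph

variable {V : Type*} [Fintype V]

lemma eq_of_adj_of_deg_le_one {K : SimpleGraph V} {x y z : V} (hx : deg K x ≤ 1)
    (hy : K.Adj x y) (hz : K.Adj x z) : y = z :=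
  Finset.card_le_one.mp hx y (by simp [hy]) z (by simp [hz])

lemma card_le_deg_of_injOn {G : SimpleGraph V} {ι : Type*} {s : Finset ι} {f : ι → V} {x : V}
    (hf : ∀ i ∈ s, G.Adj x (f i)) (hinj : Set.InjOn f s) : s.card ≤ deg G x :=
  Finset.card_le_card_of_injOn f (fun i hi => by simp [hf i hi]) hinj

lemma isAlternating_symmDiff {I J : SimpleGraph V} (hI : ∀ v, deg I v ≤ 1)
    (hJ : ∀ v, deg J v ≤ 1) : (symmDiff I J).IsAlternating I := by
  intro v w w' hne hw hw'
  simp only [symmDiff_def, sup_adj, sdiff_adj] at hw hw'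
  constructor
  · exact fun h h' => hne (eq_of_adj_of_deg_le_one (hI v) h h')
  · intro h
    by_contra h'
    exact hne (eq_of_adj_of_deg_le_one (hJ v) (by tauto) (by tauto))

end SimpleGraph

namespace SimpleGraph.IsAlternating

variable {V : Type*} {H K : SimpleGraph V} {u : V} {w : H.Walk u u}

lemma adj_getVert_succ_iff_not (halt : H.IsAlternating K) (hc : w.IsCycle) {q : ℕ}
    (hq : q + 1 < w.length) :
    K.Adj (w.getVert q) (w.getVert (q + 1)) ↔ ¬ K.Adj (w.getVert (q + 1)) (w.getVert (q + 2)) := by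
  have hne := hc.getVert_sub_one_ne_getVert_add_one (i := q + 1) (by omega)
  simp only [Nat.add_sub_cancel, Nat.add_assoc, Nat.reduceAdd] at hne
  rw [K.adj_comm]
  exact halt hne (w.adj_getVert_succ (by omega)).symm (w.adj_getVert_succ hq)

lemma adj_penultimate_iff_not_adj_snd (halt : H.IsAlternating K) (hc : w.IsCycle) :
    K.Adj w.penultimate u ↔ ¬ K.Adj u w.snd := by
  have h3 := hc.three_le_length
  have hlast := w.adj_getVert_succ (i := w.length - 1) (by omega)
  rw [Nat.sub_add_cancel (by omega), w.getVert_length] at hlast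
  rw [K.adj_comm]
  exact halt hc.snd_ne_penultimate.symm hlast.symm (w.adj_snd hc.not_nil)

lemma adj_getVert_succ_iff_even (halt : H.IsAlternating K) (hc : w.IsCycle) {p : ℕ}
    (hp : p < w.length) :
    K.Adj (w.getVert p) (w.getVert (p + 1)) ↔ (Even p ↔ K.Adj u w.snd) := by
  induction p with
  | zero => simp
  | succ p ih =>
    rw [halt.adj_getVert_succ_iff_not hc hp |>.not_left.symm, ih (by omega), Nat.even_add_one]
    tauto

lemma even_length (halt : H.IsAlternating K) (hc : w.IsCycle) : Even w.length := by
  have h3 := hc.three_le_length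
  have hlast := halt.adj_getVert_succ_iff_even hc (p := w.length - 1) (by omega)
  rw [Nat.sub_add_cancel (by omega), w.getVert_length, halt.adj_penultimate_iff_not_adj_snd hc]
    at hlast
  have : ¬ Even (w.length - 1) := by tauto
  rwa [← Nat.sub_add_cancel (by omega : 1 ≤ w.length), Nat.even_add_one]

end SimpleGraph.IsAlternating

namespace SimpleGraph.Walk.IsCycle

variable {V : Type*} [Fintype V] {H G : SimpleGraph V} {u : V} {w : H.Walk u u}

lemma card_filter_adj_getVert_le (hc : w.IsCycle) (x : V) :
    #{p ∈ range w.length | G.Adj x (w.getVert p)} ≤ deg G x := by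
  refine card_le_deg_of_injOn (fun p hp => (mem_filter.mp hp).2) ?_
  intro p hp q hq hpq
  simp only [coe_filter, mem_range, Set.mem_ofPred_eq] at hp hq
  exact hc.getVert_injOn' (by simp; omega) (by simp; omega) hpq

lemma card_filter_adj_getVert_succ_le (hc : w.IsCycle) (x : V) :
    #{p ∈ range w.length | G.Adj x (w.getVert (p + 1))} ≤ deg G x := by
  refine card_le_deg_of_injOn (fun p hp => (mem_filter.mp hp).2) ?_
  intro p hp q hq hpq
  simp only [coe_filter, mem_range, Set.mem_ofPred_eq] at hp hq
  have := hc.getVert_injOn (by simp; omega) (by simp; omega) hpq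
  omega

lemma exists_nonconsecutive_index_not_adj (hc : w.IsCycle) {Δ : ℕ} (hΔ : ∀ v, deg G v ≤ Δ)
    (heven : Even w.length) (hL : 4 * Δ + 6 < w.length) {r : ℕ} (hr : r ≤ 1) :
    ∃ j, r < j ∧ j < w.length ∧ j % 2 = r ∧ j ≠ r + 2 ∧ j + 2 ≠ r + w.length ∧
      ¬ G.Adj (w.getVert (r + 1)) (w.getVert j) ∧ ¬ G.Adj (w.getVert r) (w.getVert (j + 1)) := by
  have hLeven : w.length % 2 = 0 := Nat.even_iff.mp heven
  set N₁ := {p ∈ range w.length | G.Adj (w.getVert (r + 1)) (w.getVert p)}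
  set N₂ := {p ∈ range w.length | G.Adj (w.getVert r) (w.getVert (p + 1))}
  set excluded : Finset ℕ := {r, r + 2, r + w.length - 2} ∪ N₁ ∪ N₂
  set candidates := (range (2 * Δ + 4)).image (fun k => 2 * k + r)
  have hcandidates : #candidates = 2 * Δ + 4 := by
    rw [card_image_of_injective _ (fun k l hkl => by omega), card_range]
  have hexcluded : #excluded ≤ 2 * Δ + 3 :=
    calc #excluded
        ≤ #({r, r + 2, r + w.length - 2} ∪ N₁) + #N₂ := card_union_le _ _
      _ ≤ #{r, r + 2, r + w.length - 2} + #N₁ + #N₂ := by gcongr; exact card_union_le _ _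
      _ ≤ 3 + Δ + Δ := by
        gcongr
        · exact card_le_three
        · exact (hc.card_filter_adj_getVert_le _).trans (hΔ _)
        · exact (hc.card_filter_adj_getVert_succ_le _).trans (hΔ _)
      _ = 2 * Δ + 3 := by ring
  obtain ⟨j, hj, hjex⟩ := exists_mem_notMem_of_card_lt_card (s := excluded) (t := candidates)
    (by omega)
  obtain ⟨k, hk, rfl⟩ := mem_image.mp hj
  rw [mem_range] at hk
  have hjL : 2 * k + r < w.length := by omega
  simp only [excluded, N₁, N₂, mem_union, mem_insert, mem_singleton, mem_filter, mem_range,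
    not_or, not_and] at hjex
  obtain ⟨⟨⟨hj₀, hj₂, hjL₂⟩, hbc⟩, had⟩ := hjex
  exact ⟨2 * k + r, by omega, hjL, by omega, hj₂, by omega, hbc hjL, had hjL⟩

end SimpleGraph.Walk.IsCycle

theorem process_club_applies_general {V : Type*} [Fintype V] (G I J : SimpleGraph V) (Δ : ℕ)
    (hΔ : ∀ v, deg G v ≤ Δ)
    (hI : ∀ v, deg I v = 1) (hJ : ∀ v, deg J v = 1)
    (v : V) (w : (symmDiff I J).Walk v v) (hcycle : w.IsCycle)
    (hL : 4 * Δ + 6 < w.length) :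
    ∃ i j : ℕ, i < j ∧ j < w.length ∧ j ≠ i + 2 ∧ j + 2 ≠ i + w.length ∧
      s(w.getVert i, w.getVert (i + 1)) ∈ I.edgeSet ∧
      s(w.getVert j, w.getVert (j + 1)) ∈ I.edgeSet ∧
      ¬ G.Adj (w.getVert (i + 1)) (w.getVert j) ∧
      ¬ G.Adj (w.getVert i) (w.getVert (j + 1)) := by
  have halt := SimpleGraph.isAlternating_symmDiff (fun x => (hI x).le) (fun x => (hJ x).le)
  obtain ⟨r, hr, hred⟩ : ∃ r ≤ 1, ∀ p < w.length,
      (I.Adj (w.getVert p) (w.getVert (p + 1)) ↔ p % 2 = r) := by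
    by_cases h₀ : I.Adj v w.snd
    · exact ⟨0, zero_le_one, fun p hp => by
        simp [halt.adj_getVert_succ_iff_even hcycle hp, h₀, Nat.even_iff]⟩
    · exact ⟨1, le_rfl, fun p hp => by
        simp [halt.adj_getVert_succ_iff_even hcycle hp, h₀, Nat.even_iff]⟩
  obtain ⟨j, hrj, hj, hjr, hj₂, hjL₂, hbc, had⟩ :=
    hcycle.exists_nonconsecutive_index_not_adj hΔ (halt.even_length hcycle) hL hr
  exact ⟨r, j, hrj, hj, hj₂, hjL₂, (hred r (by omega)).2 (Nat.mod_eq_of_lt (by omega)),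
    (hred j hj).2 hjr, hbc, had⟩

/-- Let `G` have maximum degree `Δ`, and let `I`, `J` be edge-disjoint perfect matchings,
each edge-disjoint from `G` (edges of `I` red, edges of `J` blue). Let `C` be an
alternating cycle of the symmetric difference `I △ J` of length `L > 4Δ + 6`, given as
the closed walk `w`. Then there are two red edges `e = ab` and `f = cd` of `C`,
non-consecutive along `C` (their positions `i < j` satisfy `j ≠ i + 2` and
`j + 2 ≠ i + L`, so no blue edge of `C` joins them), with `a, b, c, d` in this cyclic
order on `C`, such that neither `bc` nor `ad` is an edge of `G`. -/
theorem process_club_applies {V : Type*} [Fintype V] (G I J : SimpleGraph V) (Δ : ℕ)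
    (hΔ : ∀ v, deg G v ≤ Δ)
    (hI : ∀ v, deg I v = 1) (hJ : ∀ v, deg J v = 1)
    (hIJ : Disjoint I J) (hGI : Disjoint G I) (hGJ : Disjoint G J)
    (v : V) (w : (symmDiff I J).Walk v v) (hcycle : w.IsCycle)
    (hL : 4 * Δ + 6 < w.length) :
    ∃ i j : ℕ, i < j ∧ j < w.length ∧ j ≠ i + 2 ∧ j + 2 ≠ i + w.length ∧
      s(w.getVert i, w.getVert (i + 1)) ∈ I.edgeSet ∧
      s(w.getVert j, w.getVert (j + 1)) ∈ I.edgeSet ∧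
      ¬ G.Adj (w.getVert (i + 1)) (w.getVert j) ∧
      ¬ G.Adj (w.getVert i) (w.getVert (j + 1)) :=
  process_club_applies_general G I J Δ hΔ hI hJ v w hcycle hL
end

section
/- Let n ≥ 4 be even, let G be a simple graph on n vertices with maximum degree at most n/24, and let I and J be perfect matchings on the same vertex set. Then there exists a perfect matching I′ on this vertex set that is edge-disjoint from each of G, I, and J. -/
open scoped Classical

/-!
Let `H = G ⊔ I ⊔ J`; a perfect matching of the complement `Hᶜ` is the required `I'`. Take a
maximum matching `M` of `Hᶜ` and suppose it misses two vertices `u ≠ v` (by parity it misses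
none or at least two). Every neighbour of `u` or `v` is covered by `M`, and no edge `xy` of `M`
has `u ~ x` and `v ~ y`, since otherwise `M` could be augmented along `u x y v`. So the
neighbours of `u` and the `M`-partners of the neighbours of `v` are disjoint sets of covered
vertices, and `deg u + deg v ≤ |V(M)| ≤ n - 2`. But `H` has maximum degree at most `n/24 + 2`,
so degrees in `Hᶜ` sum pairwise to at least `n - 1` as soon as `n ≥ 6`.

For `n = 4` the graph `G` is empty and every degree of `Hᶜ` is `1` or `2`. Then `M` covers just
a neighbour `x` of `u` and its partner `y`; a neighbour of `v` is covered and is not `y`, so it is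
`x`, which is then adjacent to `u`, `v` and `y`.
-/

namespace SimpleGraph

variable {V : Type*} {G : SimpleGraph V}

theorem degree_sup_le {G₁ G₂ : SimpleGraph V} (v : V) [Fintype ((G₁ ⊔ G₂).neighborSet v)]
    [Fintype (G₁.neighborSet v)] [Fintype (G₂.neighborSet v)] :
    (G₁ ⊔ G₂).degree v ≤ G₁.degree v + G₂.degree v := by
  simp only [← card_neighborFinset_eq_degree, neighborFinset_sup]
  exact Finset.card_union_le _ _

namespace Subgraph

variable {M : G.Subgraph} {u v w x y : V}

lemma IsMatching.deleteVerts_pair (hM : M.IsMatching) (hxy : M.Adj x y) :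
    (M.deleteVerts {x, y}).IsMatching := by
  rintro w ⟨hw, hwxy⟩
  obtain ⟨w', hww', huniq⟩ := hM hw
  have hw' : w' ∉ ({x, y} : Set V) := by
    rintro (rfl | rfl)
    · exact hwxy (.inr (hM.eq_of_adj_right hww' hxy.symm))
    · exact hwxy (.inl (hM.eq_of_adj_right hww' hxy))
  exact ⟨w', deleteVerts_adj.mpr ⟨hw, hwxy, M.edge_vert hww'.symm, hw', hww'⟩,
    fun z hz => huniq z (deleteVerts_adj.mp hz).2.2.2.2⟩

lemma IsMatching.exists_ne_notMem_verts [Fintype V] (hV : Even (Fintype.card V))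
    (hM : M.IsMatching) (hspan : ¬M.IsSpanning) :
    ∃ u v, u ≠ v ∧ u ∉ M.verts ∧ v ∉ M.verts := by
  obtain ⟨w, hw⟩ := not_forall.mp hspan
  have hpos : 0 < M.verts.toFinsetᶜ.card := Finset.card_pos.mpr ⟨w, by simpa using hw⟩
  have heven : Even M.verts.toFinsetᶜ.card := by
    rw [Finset.card_compl]
    exact hV.tsub hM.even_card
  have htwo : 1 < M.verts.toFinsetᶜ.card := by obtain ⟨k, hk⟩ := heven; omega
  obtain ⟨u, hu, v, hv, huv⟩ := Finset.one_lt_card.mp htwo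
  exact ⟨u, v, huv, by simpa using hu, by simpa using hv⟩

def IsMaximumMatching (M : G.Subgraph) : Prop :=
  M.IsMatching ∧ ∀ M' : G.Subgraph, M'.IsMatching → M'.verts.ncard ≤ M.verts.ncard

namespace IsMaximumMatching

variable [Finite V] (hM : M.IsMaximumMatching)
include hM

lemma not_verts_ssubset {M' : G.Subgraph} (hM' : M'.IsMatching) : ¬M.verts ⊂ M'.verts :=
  fun h => (Set.ncard_lt_ncard h).not_ge (hM.2 M' hM')

lemma mem_verts_of_adj (hu : u ∉ M.verts) (huw : G.Adj u w) : w ∈ M.verts := by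
  by_contra hw
  have hmatch : (M ⊔ G.subgraphOfAdj huw).IsMatching := by
    refine hM.1.sup (.subgraphOfAdj huw) ?_
    rw [hM.1.support_eq_verts, (IsMatching.subgraphOfAdj huw).support_eq_verts,
      subgraphOfAdj_verts]
    simp [Set.disjoint_right, hu, hw]
  refine hM.not_verts_ssubset hmatch ((Set.ssubset_iff_of_subset le_sup_left).mpr ⟨u, ?_, hu⟩)
  simp

lemma not_adj_of_adj (hu : u ∉ M.verts) (hv : v ∉ M.verts) (huv : u ≠ v) (hxy : M.Adj x y)
    (hux : G.Adj u x) : ¬G.Adj v y := by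
  intro hvy
  have hdel := hM.1.deleteVerts_pair hxy
  have hux' : (M.deleteVerts {x, y} ⊔ G.subgraphOfAdj hux).IsMatching := by
    refine hdel.sup (.subgraphOfAdj hux) ?_
    rw [hdel.support_eq_verts, (IsMatching.subgraphOfAdj hux).support_eq_verts,
      subgraphOfAdj_verts, deleteVerts_verts]
    grind
  have hmatch := hux'.sup (.subgraphOfAdj hvy) (by
    rw [hux'.support_eq_verts, (IsMatching.subgraphOfAdj hvy).support_eq_verts, verts_sup,
      subgraphOfAdj_verts, subgraphOfAdj_verts, deleteVerts_verts]
    grind [M.edge_vert hxy, M.edge_vert hxy.symm, hxy.ne])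
  refine hM.not_verts_ssubset hmatch ((Set.ssubset_iff_of_subset fun w hw => ?_).mpr ⟨u, ?_, hu⟩)
  · simp only [verts_sup, deleteVerts_verts, subgraphOfAdj_verts]
    grind
  · simp

lemma degree_add_degree_le [Fintype V] (hu : u ∉ M.verts) (hv : v ∉ M.verts) (huv : u ≠ v) :
    G.degree u + G.degree v ≤ M.verts.ncard := by
  have hA : G.neighborFinset u ⊆ M.verts.toFinset := fun w hw =>
    Set.mem_toFinset.mpr (hM.mem_verts_of_adj hu ((mem_neighborFinset _ _ _).mp hw))
  have hB : G.degree v ≤ (M.verts.toFinset \ G.neighborFinset u).card := by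
    rw [← card_neighborFinset_eq_degree]
    refine Finset.card_le_card_of_forall_subsingleton M.Adj (fun w hw => ?_)
      fun y _ w₁ hw₁ w₂ hw₂ => hM.1.eq_of_adj_right hw₁.2 hw₂.2
    have hvw := (mem_neighborFinset _ _ _).mp hw
    obtain ⟨y, hwy, -⟩ := hM.1 (hM.mem_verts_of_adj hv hvw)
    refine ⟨y, Finset.mem_sdiff.mpr ⟨Set.mem_toFinset.mpr (M.edge_vert hwy.symm), fun hy => ?_⟩,
      hwy⟩
    exact hM.not_adj_of_adj hu hv huv hwy.symm ((mem_neighborFinset _ _ _).mp hy) hvw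
  rw [Set.ncard_eq_toFinset_card', ← Finset.card_sdiff_add_card_eq_card hA,
    card_neighborFinset_eq_degree]
  omega

end IsMaximumMatching

end Subgraph

lemma exists_isMaximumMatching [Finite V] (G : SimpleGraph V) :
    ∃ M : G.Subgraph, M.IsMaximumMatching := by
  obtain ⟨M, hM, hmax⟩ := Set.exists_max_image {M : G.Subgraph | M.IsMatching}
    (fun M => M.verts.ncard) (Set.toFinite _) ⟨⊥, fun _ hv => hv.elim⟩
  exact ⟨M, hM, hmax⟩

variable [Fintype V]

theorem exists_isPerfectMatching_of_degree_add_degree (hV : Even (Fintype.card V))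
    (h : ∀ u v, u ≠ v → ¬G.Adj u v → Fintype.card V - 1 ≤ G.degree u + G.degree v) :
    ∃ M : G.Subgraph, M.IsPerfectMatching := by
  obtain ⟨M, hM⟩ := G.exists_isMaximumMatching
  refine ⟨M, hM.1, by_contra fun hspan => ?_⟩
  obtain ⟨u, v, huv, hu, hv⟩ := hM.1.exists_ne_notMem_verts hV hspan
  have hcard := Set.ncard_le_card (insert u (insert v M.verts))
  rw [Set.ncard_insert_of_notMem (by simp [huv, hu]), Set.ncard_insert_of_notMem hv,
    Nat.card_eq_fintype_card] at hcard
  have := h u v huv fun huv' => hv (hM.mem_verts_of_adj hu huv')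
  have := hM.degree_add_degree_le hu hv huv
  omega

theorem exists_isPerfectMatching_of_card_eq_four (hV : Fintype.card V = 4)
    (hpos : ∀ v, 0 < G.degree v) (hle : ∀ v, G.degree v ≤ 2) :
    ∃ M : G.Subgraph, M.IsPerfectMatching := by
  obtain ⟨M, hM⟩ := G.exists_isMaximumMatching
  refine ⟨M, hM.1, by_contra fun hspan => ?_⟩
  obtain ⟨u, v, huv, hu, hv⟩ := hM.1.exists_ne_notMem_verts (hV ▸ even_two_mul 2) hspan
  obtain ⟨x, hux⟩ := (G.degree_pos_iff_exists_adj u).mp (hpos u)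
  obtain ⟨z, hvz⟩ := (G.degree_pos_iff_exists_adj v).mp (hpos v)
  have hx := hM.mem_verts_of_adj hu hux
  have hz := hM.mem_verts_of_adj hv hvz
  obtain ⟨y, hxy, -⟩ := hM.1 hx
  have hy := M.edge_vert hxy.symm
  have hzy : z ≠ y := fun h => hM.not_adj_of_adj hu hv huv hxy hux (h ▸ hvz)
  have hzx : z = x := by
    -- otherwise `u, v, x, y, z` would be five distinct vertices
    by_contra hzx
    have := Finset.card_le_univ {u, v, x, y, z}
    rw [Finset.card_insert_of_notMem, Finset.card_insert_of_notMem, Finset.card_insert_of_notMem,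
      Finset.card_pair hzy.symm, hV] at this
    · omega
    all_goals
      simp only [Finset.mem_insert, Finset.mem_singleton, not_or]
      grind [hxy.ne]
  have : 3 ≤ G.degree x := by
    rw [← card_neighborFinset_eq_degree]
    calc 3 = ({u, v, y} : Finset V).card := by
          rw [Finset.card_insert_of_notMem, Finset.card_pair] <;> grind
      _ ≤ _ := Finset.card_le_card <| by
          simp only [Finset.insert_subset_iff, Finset.singleton_subset_iff, mem_neighborFinset]
          exact ⟨hux.symm, hzx ▸ hvz.symm, hxy.adj_sub⟩
  linarith [hle x]

end SimpleGraph

theorem deg_eq_degree {V : Type*} [Fintype V] (G : SimpleGraph V) (v : V) :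
    deg G v = G.degree v := by
  rw [deg, ← SimpleGraph.card_neighborFinset_eq_degree, SimpleGraph.neighborFinset_eq_filter]

/-- Let `n ≥ 4` be even, let `G` be a simple graph on `n` vertices with maximum degree
at most `n/24`, and let `I` and `J` be perfect matchings on the same vertex set. Then
there exists a perfect matching `I′` edge-disjoint from each of `G`, `I` and `J`. -/
theorem exists_disjoint_one_factor {V : Type*} [Fintype V] (n : ℕ)
    (hn : Fintype.card V = n) (heven : Even n) (h4 : 4 ≤ n)
    (G I J : SimpleGraph V)
    (hΔ : ∀ v, 24 * deg G v ≤ n)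
    (hI : ∀ v, deg I v = 1) (hJ : ∀ v, deg J v = 1) :
    ∃ I' : SimpleGraph V, (∀ v, deg I' v = 1) ∧
      Disjoint I' G ∧ Disjoint I' I ∧ Disjoint I' J := by
  simp only [deg_eq_degree] at *
  set H := G ⊔ I ⊔ J
  have hdegree (v : V) : n ≤ Hᶜ.degree v + G.degree v + 3 ∧ Hᶜ.degree v + 2 ≤ n := by
    have hlt := H.degree_lt_card_verts v
    have hGI : (G ⊔ I).degree v ≤ G.degree v + I.degree v := SimpleGraph.degree_sup_le v
    have hH : H.degree v ≤ (G ⊔ I).degree v + J.degree v := SimpleGraph.degree_sup_le v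
    have hJH : J.degree v ≤ H.degree v := SimpleGraph.degree_le_of_le le_sup_right
    rw [SimpleGraph.degree_compl]
    grind
  obtain ⟨M, hM⟩ : ∃ M : Hᶜ.Subgraph, M.IsPerfectMatching := by
    obtain rfl | h6 : n = 4 ∨ 6 ≤ n := by obtain ⟨k, rfl⟩ := heven; omega
    · exact SimpleGraph.exists_isPerfectMatching_of_card_eq_four hn (fun v => by grind)
        fun v => by grind
    · exact SimpleGraph.exists_isPerfectMatching_of_degree_add_degree (hn ▸ heven)
        fun u v _ _ => by grind
  have hdisj {X : SimpleGraph V} (hX : X ≤ H) : Disjoint M.spanningCoe X :=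
    (disjoint_compl_left.mono_right hX).mono_left M.spanningCoe_le
  refine ⟨M.spanningCoe, fun v => ?_, hdisj (le_sup_left.trans le_sup_left),
    hdisj (le_sup_right.trans le_sup_left), hdisj le_sup_right⟩
  rw [SimpleGraph.Subgraph.degree_spanningCoe]
  exact SimpleGraph.Subgraph.isPerfectMatching_iff_forall_degree.mp hM v
end
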